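/- Let H : ℝ → ℝ be continuous and coercive, let A = (p_α)_{α∈I} be a set limiter for H, and let F_A be the A-limited flux function. Then: (1) for every α ∈ I and every p ∈ (p_α⁻, p_α), F_A(p) > H(p); (2) for every α ∈ I and every p ∈ (p_α, p_α⁺), F_A(p) < H(p); (3) if p does not belong to ∪_{α∈I} ((p_α⁻, p_α) ∪ (p_α, p_α⁺)), then F_A(p) = H(p). -/

import Mathlib

open Set Filter Topology

/-- `p⁻ = sup {q < p : H(q) ≥ H(p)}`. -/
noncomputable def pminus (H : ℝ → ℝ) (p : ℝ) : ℝ :=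
  sSup {q : ℝ | q < p ∧ H p ≤ H q}

/-- `p⁺ = inf {q > p : H(q) ≤ H(p)}`, with `inf ∅ = +∞` (extended reals). -/
noncomputable def pplus (H : ℝ → ℝ) (p : ℝ) : EReal :=
  sInf (Real.toEReal '' {q : ℝ | p < q ∧ H q ≤ H p})

/-- `H(p) → +∞` as `|p| → +∞`. -/
def Coercive (H : ℝ → ℝ) : Prop :=
  Tendsto H atTop atTop ∧ Tendsto H atBot atTop

/-- `F(p) → +∞` as `p → -∞`. -/
def SemiCoercive (F : ℝ → ℝ) : Prop := Tendsto F atBot atTop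

/-- the open interval `(a⁻, a⁺)` (upper endpoint possibly `+∞`). -/
def ooMM (H : ℝ → ℝ) (a : ℝ) : Set ℝ :=
  {r : ℝ | pminus H a < r ∧ (r : EReal) < pplus H a}

/-- the open interval `(p, p⁺)` (upper endpoint possibly `+∞`). -/
def ooUp (H : ℝ → ℝ) (p : ℝ) : Set ℝ :=
  {r : ℝ | p < r ∧ (r : EReal) < pplus H p}

/-- the closed interval `[a⁻, a⁺]` (upper endpoint possibly `+∞`). -/
def ccMM (H : ℝ → ℝ) (a : ℝ) : Set ℝ :=
  {r : ℝ | pminus H a ≤ r ∧ (r : EReal) ≤ pplus H a}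

/-- `A` is a set limiter for `H`. -/
def IsSetLimiter (H : ℝ → ℝ) (A : Set ℝ) : Prop :=
  (∀ a ∈ A, (pminus H a : EReal) ≠ pplus H a) ∧
  (∀ a ∈ A, ∀ b ∈ A, a < b → H b ≤ H a) ∧
  (∀ p : ℝ, pminus H p < p → ∃ a ∈ A, (Ioo (pminus H p) p ∩ ooMM H a).Nonempty) ∧
  (∀ p : ℝ, (p : EReal) < pplus H p → ∃ a ∈ A, (ooUp H p ∩ ooMM H a).Nonempty)

open Classical in
/-- The `A`-limited flux function `F_A`: equal to `H(a)` on `[a⁻, a⁺]` for `a ∈ A`,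
and to `H` elsewhere. -/
noncomputable def limFlux (H : ℝ → ℝ) (A : Set ℝ) (p : ℝ) : ℝ :=
  if h : ∃ a, a ∈ A ∧ p ∈ ccMM H a then H h.choose else H p

/-- Condition (S) in the definition of `A_F`. -/
def CondS (H F : ℝ → ℝ) (p : ℝ) : Prop :=
  pminus H p ≠ p ∧ H p ≤ F p ∧
    ∀ q : ℝ, H q ≤ F q → (ooMM H q ∩ Ioo (pminus H p) p).Nonempty → H q ≤ H p

/-- Condition (T) in the definition of `A_F`. -/
def CondT (H F : ℝ → ℝ) (p : ℝ) : Prop :=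
  (p : EReal) ≠ pplus H p ∧ F p ≤ H p ∧
    ∀ q : ℝ, F q ≤ H q → (ooMM H q ∩ ooUp H p).Nonempty → H p ≤ H q

/-- The set `A_F` associated with a boundary function `F`. -/
def limiterOf (H F : ℝ → ℝ) : Set ℝ := {p : ℝ | CondS H F p ∨ CondT H F p}

/-!
Below `p`, the definition of `p⁻` forces `H < H(p)` on `(p⁻, p)`, and above it `H > H(p)` on
`(p, p⁺)`. If `p` lies in such an interval of `a ∈ A` and also in `[b⁻, b⁺]` for `b ∈ A`, the
monotonicity of `H` along `A` rules out `b` lying on the wrong side of `a` (it would put `a` in one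
of the intervals of `b`), so `F_A(p) = H(b)` compares with `H(p)` through `H(a)`. Off these
intervals, `p ∈ [b⁻, b⁺]` means `p ∈ {b⁻, b, b⁺}`, where `H` takes the value `H(b)` by continuity.
-/

section Envelope

variable {H : ℝ → ℝ} {p q r : ℝ}

lemma le_pminus (hq : q < p) (hHq : H p ≤ H q) : q ≤ pminus H p :=
  le_csSup ⟨p, fun _ hx => hx.1.le⟩ ⟨hq, hHq⟩

lemma pplus_le (hq : p < q) (hHq : H q ≤ H p) : pplus H p ≤ q :=
  sInf_le ⟨q, ⟨hq, hHq⟩, rfl⟩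

lemma apply_lt_of_mem_Ioo_pminus (hq : q ∈ Ioo (pminus H p) p) : H q < H p :=
  lt_of_not_ge fun h => (le_pminus hq.2 h).not_gt hq.1

lemma apply_lt_of_mem_ooUp (hq : q ∈ ooUp H p) : H p < H q :=
  lt_of_not_ge fun h => (pplus_le hq.1 h).not_gt hq.2

lemma nonempty_pminusSet (hbot : Tendsto H atBot atTop) (p : ℝ) :
    {q : ℝ | q < p ∧ H p ≤ H q}.Nonempty := by
  obtain ⟨q, hHq, hq⟩ := ((hbot.eventually_ge_atTop (H p)).and (eventually_lt_atBot p)).exists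
  exact ⟨q, hq, hHq⟩

lemma pminus_le (hbot : Tendsto H atBot atTop) (p : ℝ) : pminus H p ≤ p :=
  csSup_le (nonempty_pminusSet hbot p) fun _ hq => hq.1.le

lemma le_pplus (H : ℝ → ℝ) (p : ℝ) : (p : EReal) ≤ pplus H p :=
  le_sInf <| by
    rintro _ ⟨q, hq, rfl⟩
    exact EReal.coe_le_coe_iff.2 hq.1.le

lemma apply_pminus (hH : Continuous H) (hbot : Tendsto H atBot atTop) (p : ℝ) :
    H (pminus H p) = H p := by
  refine le_antisymm ?_ ?_
  · rcases (pminus_le hbot p).lt_or_eq with hlt | heq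
    · refine le_of_tendsto (hH.continuousWithinAt (s := Ioi (pminus H p)) (x := pminus H p)) ?_
      filter_upwards [Ioo_mem_nhdsGT hlt] with q hq
      exact (apply_lt_of_mem_Ioo_pminus hq).le
    · rw [heq]
  · have hmem : pminus H p ∈ closure {q : ℝ | q < p ∧ H p ≤ H q} :=
      csSup_mem_closure (nonempty_pminusSet hbot p) ⟨p, fun _ hq => hq.1.le⟩
    exact closure_minimal (fun q hq => hq.2) (isClosed_le continuous_const hH) hmem

-- `p⁺ = r` is finite, so `r` is the infimum of a nonempty set of reals on which `H ≤ H(p)`.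
lemma apply_eq_of_pplus_eq (hH : Continuous H) (hr : pplus H p = r) : H r = H p := by
  set S := {q : ℝ | p < q ∧ H q ≤ H p}
  have hglb : IsGLB S r := by
    refine ⟨fun q hq => EReal.coe_le_coe_iff.1 (hr ▸ pplus_le hq.1 hq.2), fun x hx => ?_⟩
    refine EReal.coe_le_coe_iff.1 (hr ▸ le_sInf ?_)
    rintro _ ⟨q, hq, rfl⟩
    exact EReal.coe_le_coe_iff.2 (hx hq)
  have hS : S.Nonempty := by
    by_contra hS
    rw [not_nonempty_iff_eq_empty] at hS
    simp [pplus, S, hS] at hr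
  refine le_antisymm ?_ ?_
  · exact closure_minimal (fun q hq => hq.2) (isClosed_le hH continuous_const) (hglb.mem_closure hS)
  · rcases (EReal.coe_le_coe_iff.1 (hr ▸ le_pplus H p)).lt_or_eq with hlt | heq
    · refine ge_of_tendsto (hH.continuousWithinAt (s := Iio r) (x := r)) ?_
      filter_upwards [Ioo_mem_nhdsLT hlt] with q hq
      exact (apply_lt_of_mem_ooUp ⟨hq.1, hr ▸ EReal.coe_lt_coe_iff.2 hq.2⟩).le
    · rw [heq]

lemma mem_ccMM_of_mem_Ioo_pminus (hp : p ∈ Ioo (pminus H q) q) : p ∈ ccMM H q :=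
  ⟨hp.1.le, (EReal.coe_le_coe_iff.2 hp.2.le).trans (le_pplus H q)⟩

lemma mem_ccMM_of_mem_ooUp (hbot : Tendsto H atBot atTop) (hp : p ∈ ooUp H q) : p ∈ ccMM H q :=
  ⟨(pminus_le hbot q).trans hp.1.le, hp.2.le⟩

lemma apply_eq_of_mem_ccMM_of_notMem (hH : Continuous H) (hbot : Tendsto H atBot atTop)
    (hp : p ∈ ccMM H q) (hp₁ : p ∉ Ioo (pminus H q) q) (hp₂ : p ∉ ooUp H q) : H q = H p := by
  rcases lt_trichotomy p q with hlt | rfl | hgt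
  · have heq : pminus H q = p := hp.1.eq_of_not_lt fun h => hp₁ ⟨h, hlt⟩
    rw [← heq, apply_pminus hH hbot]
  · rfl
  · have heq : pplus H q = p := (hp.2.eq_of_not_lt fun h => hp₂ ⟨hgt, h⟩).symm
    exact (apply_eq_of_pplus_eq hH heq).symm

end Envelope

section Limiter

variable {H : ℝ → ℝ} {A : Set ℝ} {a b : ℝ}

lemma IsSetLimiter.antitoneOn (hA : IsSetLimiter H A) : AntitoneOn H A :=
  antitoneOn_iff_forall_lt.2 fun _ ha _ hb hab => hA.2.1 _ ha _ hb hab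

lemma le_of_pminus_lt (hanti : AntitoneOn H A) (ha : a ∈ A) (hb : b ∈ A)
    (hab : pminus H b < a) : b ≤ a :=
  le_of_not_gt fun hlt => (apply_lt_of_mem_Ioo_pminus ⟨hab, hlt⟩).not_ge (hanti ha hb hlt.le)

lemma le_of_lt_pplus (hanti : AntitoneOn H A) (ha : a ∈ A) (hb : b ∈ A)
    (hab : (a : EReal) < pplus H b) : a ≤ b :=
  le_of_not_gt fun hlt => (apply_lt_of_mem_ooUp ⟨hlt, hab⟩).not_ge (hanti hb ha hlt.le)

lemma exists_limFlux_eq {p : ℝ} (h : ∃ a ∈ A, p ∈ ccMM H a) :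
    ∃ b ∈ A, p ∈ ccMM H b ∧ limFlux H A p = H b := by
  classical
  exact ⟨h.choose, h.choose_spec.1, h.choose_spec.2, by rw [limFlux, dif_pos h]⟩

lemma limFlux_eq_self {p : ℝ} (h : ∀ b ∈ A, p ∈ ccMM H b → H b = H p) :
    limFlux H A p = H p := by
  by_cases hex : ∃ a ∈ A, p ∈ ccMM H a
  · obtain ⟨b, hb, hpb, hF⟩ := exists_limFlux_eq hex
    rw [hF, h b hb hpb]
  · rw [limFlux, dif_neg hex]

end Limiter

theorem stmt4 (H : ℝ → ℝ) (hH : Continuous H) (hcoer : Coercive H)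
    (A : Set ℝ) (hA : IsSetLimiter H A) :
    (∀ a ∈ A, ∀ p ∈ Ioo (pminus H a) a, H p < limFlux H A p) ∧
    (∀ a ∈ A, ∀ p ∈ ooUp H a, limFlux H A p < H p) ∧
    (∀ p : ℝ, (∀ a ∈ A, p ∉ Ioo (pminus H a) a ∧ p ∉ ooUp H a) →
      limFlux H A p = H p) := by
  have hanti := hA.antitoneOn
  refine ⟨fun a ha p hp => ?_, fun a ha p hp => ?_, fun p hp => ?_⟩
  · obtain ⟨b, hb, hpb, hF⟩ := exists_limFlux_eq ⟨a, ha, mem_ccMM_of_mem_Ioo_pminus hp⟩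
    have hba : b ≤ a := le_of_pminus_lt hanti ha hb (hpb.1.trans_lt hp.2)
    calc H p < H a := apply_lt_of_mem_Ioo_pminus hp
      _ ≤ H b := hanti hb ha hba
      _ = limFlux H A p := hF.symm
  · obtain ⟨b, hb, hpb, hF⟩ := exists_limFlux_eq ⟨a, ha, mem_ccMM_of_mem_ooUp hcoer.2 hp⟩
    have hab : a ≤ b := le_of_lt_pplus hanti ha hb ((EReal.coe_lt_coe_iff.2 hp.1).trans_le hpb.2)
    calc limFlux H A p = H b := hF
      _ ≤ H a := hanti ha hb hab
      _ < H p := apply_lt_of_mem_ooUp hp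
  · exact limFlux_eq_self fun b hb hpb =>
      apply_eq_of_mem_ccMM_of_notMem hH hcoer.2 hpb (hp b hb).1 (hp b hb).2
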